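/- arXiv:math/0502103 — 2 statements merged into one kernel-verified Lean document; each statement's English description precedes it below -/
import Mathlib

section
/- For every continuous function f on 𝕋 and every C¹ diffeomorphism γ of 𝕋, ‖(∂_x^{-1})_γ f − ∂_x^{-1} f‖_{C¹} ≤ C_γ ‖f‖_{L^∞} ‖γ − id‖_{C¹}, where (∂_x^{-1})_γ f := (∂_x^{-1}(f∘γ^{-1}))∘γ and the constant C_γ depends only on the C¹ norms of γ and γ^{-1}. -/
open MeasureTheory Set

noncomputable section

/-- The operator `∂ₓ⁻¹` with base point `x₀`, acting on (1-periodic) functions on `ℝ`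
(i.e. functions on the circle `𝕋 = ℝ/ℤ`):
`∂ₓ⁻¹ f (x) = ∫_{x₀}^x f(y) dy − ∫_𝕋 ∫_{x₀}^x f(y) dy dx`. -/
def aInv (x₀ : ℝ) (f : ℝ → ℝ) : ℝ → ℝ :=
  fun x => (∫ y in x₀..x, f y) - ∫ z in (0:ℝ)..(1:ℝ), (∫ y in x₀..z, f y)

/-- `n`-th Fourier coefficient of a 1-periodic function on `ℝ`. -/
def fc (u : ℝ → ℝ) (n : ℤ) : ℂ :=
  ∫ x in (0:ℝ)..(1:ℝ),
    Complex.exp (-2 * (Real.pi : ℂ) * Complex.I * (n : ℂ) * (x : ℂ)) * (u x : ℂ)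

/-- The Sobolev `H^s(𝕋)` norm of a 1-periodic function, via Fourier coefficients. -/
def hsNorm (s : ℝ) (u : ℝ → ℝ) : ℝ :=
  Real.sqrt (∑' n : ℤ, (1 + (n : ℝ) ^ 2) ^ s * ‖fc u n‖ ^ 2)

/-- Membership in the Sobolev space `H^s(𝕋)` (for `s > 1/2`, where members are continuous). -/
def MemHs (s : ℝ) (u : ℝ → ℝ) : Prop :=
  Function.Periodic u 1 ∧ Continuous u ∧
    Summable (fun n : ℤ => (1 + (n : ℝ) ^ 2) ^ s * ‖fc u n‖ ^ 2)

/-- Sup (`L^∞`) norm of a function on the circle. -/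
def supNorm (u : ℝ → ℝ) : ℝ := ⨆ x : ℝ, |u x|

/-- `C¹` norm of a function on the circle. -/
def c1Norm (u : ℝ → ℝ) : ℝ := supNorm u + supNorm (deriv u)

/-- `u ∈ C¹(𝕋)`: a continuously differentiable 1-periodic function. -/
def IsC1Per (u : ℝ → ℝ) : Prop := Function.Periodic u 1 ∧ ContDiff ℝ 1 u

/-- A `C¹` diffeomorphism of the circle `𝕋 = ℝ/ℤ` (isotopic to the identity),
presented by a lift `f : ℝ → ℝ` with `f (x+1) = f x + 1` together with a `C¹` inverse. -/
structure C1Diffeo where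
  f : ℝ → ℝ
  finv : ℝ → ℝ
  contDiff : ContDiff ℝ 1 f
  contDiff_inv : ContDiff ℝ 1 finv
  lift : ∀ x, f (x + 1) = f x + 1
  left_inv : Function.LeftInverse finv f
  right_inv : Function.RightInverse finv f

/-- A diffeomorphism of the circle of Sobolev class `H^s`, presented by a lift
`f : ℝ → ℝ` (so `f - id` is 1-periodic of class `H^s`) with inverse of class `H^s`. -/
structure HsDiffeo (s : ℝ) where
  f : ℝ → ℝ
  finv : ℝ → ℝ
  mem : MemHs s (fun x => f x - x)
  mem_inv : MemHs s (fun x => finv x - x)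
  left_inv : Function.LeftInverse finv f
  right_inv : Function.RightInverse finv f

/-- `‖γ - id‖_{C¹}` for (a lift of) a circle map `γ`. -/
def distC1 (γ : ℝ → ℝ) : ℝ := c1Norm (fun x => γ x - x)

/-- The `C¹` norm of a circle map `γ`, computed via a lift (the identity part
contributes the constant `1`). -/
def mapC1Norm (γ : ℝ → ℝ) : ℝ := c1Norm (fun x => γ x - x) + 1

/-- `‖γ - id‖_{H^s}` for (a lift of) a circle map `γ`. -/
def distHs (s : ℝ) (γ : ℝ → ℝ) : ℝ := hsNorm s (fun x => γ x - x)

/-- The `H^s` norm of a circle map `γ`, computed via a lift (the identity part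
contributes the constant `1`). -/
def mapHsNorm (s : ℝ) (γ : ℝ → ℝ) : ℝ := hsNorm s (fun x => γ x - x) + 1

/-- The conjugated derivative operator `(∂ₓ)_γ g := (∂ₓ (g ∘ γ⁻¹)) ∘ γ`. -/
def dConj (γ γinv : ℝ → ℝ) (g : ℝ → ℝ) : ℝ → ℝ := fun x => deriv (g ∘ γinv) (γ x)

/-- The conjugated operator `(∂ₓ⁻¹)_γ g := (∂ₓ⁻¹ (g ∘ γ⁻¹)) ∘ γ`. -/
def aInvConj (x₀ : ℝ) (γ γinv : ℝ → ℝ) (g : ℝ → ℝ) : ℝ → ℝ :=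
  fun x => aInv x₀ (g ∘ γinv) (γ x)

/-- The right-hand side of the modified Hunter–Saxton equation solved for `∂ₜ u`:
`∂ₜ u = (p/2) ∂ₓ⁻¹ (u^(p-1) (∂ₓ u)²) - u^p ∂ₓ u`. -/
def mhsRHS (p : ℕ) (x₀ : ℝ) (v : ℝ → ℝ) : ℝ → ℝ :=
  fun x => ((p : ℝ) / 2) * aInv x₀ (fun y => v y ^ (p - 1) * (deriv v y) ^ 2) x
    - v x ^ p * deriv v x

/-- `u` solves the modified Hunter–Saxton equation for times in `I`. -/
def IsSolOn (p : ℕ) (x₀ : ℝ) (u : ℝ → ℝ → ℝ) (I : Set ℝ) : Prop :=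
  ∀ t ∈ I, ∀ x : ℝ, HasDerivWithinAt (fun τ => u τ x) (mhsRHS p x₀ (u t) x) I t

/-- `t ↦ u t` is continuous on `I` with respect to the norm `N`. -/
def ContIn (N : (ℝ → ℝ) → ℝ) (u : ℝ → ℝ → ℝ) (I : Set ℝ) : Prop :=
  ∀ t ∈ I, ∀ ε > 0, ∃ δ > 0, ∀ t' ∈ I, |t' - t| < δ →
    N (fun x => u t' x - u t x) < ε

/-- `t ↦ u t` is differentiable on `I` with derivative `w`, in the norm `N`. -/
def DiffIn (N : (ℝ → ℝ) → ℝ) (u w : ℝ → ℝ → ℝ) (I : Set ℝ) : Prop :=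
  ∀ t ∈ I, ∀ ε > 0, ∃ δ > 0, ∀ t' ∈ I, t' ≠ t → |t' - t| < δ →
    N (fun x => (u t' x - u t x) / (t' - t) - w t x) < ε

/-- `u ∈ C⁰(I, H^s(𝕋)) ∩ C¹(I, H^{s-1}(𝕋))`. -/
def InClassHs (s : ℝ) (u : ℝ → ℝ → ℝ) (I : Set ℝ) : Prop :=
  (∀ t ∈ I, MemHs s (u t)) ∧ ContIn (hsNorm s) u I ∧
    ∃ w : ℝ → ℝ → ℝ, (∀ t ∈ I, MemHs (s - 1) (w t)) ∧
      ContIn (hsNorm (s - 1)) w I ∧ DiffIn (hsNorm (s - 1)) u w I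

/-- `u ∈ C⁰(I, C¹(𝕋)) ∩ C¹(I, L^∞(𝕋))`. -/
def InClassC1 (u : ℝ → ℝ → ℝ) (I : Set ℝ) : Prop :=
  (∀ t ∈ I, IsC1Per (u t)) ∧ ContIn c1Norm u I ∧
    ∃ w : ℝ → ℝ → ℝ, (∀ t ∈ I, Function.Periodic (w t) 1 ∧ ∃ M, ∀ x, |w t x| ≤ M) ∧
      ContIn supNorm w I ∧ DiffIn supNorm u w I

/-- The sequence whose supremum defines the `E_s` norm. -/
def enSeq (s : ℝ) (u : ℝ → ℝ) (k : ℕ) : ℝ :=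
  hsNorm 2 (deriv^[k] u) * s ^ k * ((k : ℝ) + 1) ^ 2 / (Nat.factorial k : ℝ)

/-- The norm `|||u|||_s = sup_k ‖∂ₓᵏ u‖_{H²} sᵏ (k+1)² / k!` of the scale `E_s`. -/
def eNorm (s : ℝ) (u : ℝ → ℝ) : ℝ := ⨆ k : ℕ, enSeq s u k

/-- Membership in `E_s`: smooth 1-periodic functions with zero mean and finite norm. -/
def MemE (s : ℝ) (u : ℝ → ℝ) : Prop :=
  Function.Periodic u 1 ∧ ContDiff ℝ (⊤ : ℕ∞) u ∧ (∫ x in (0:ℝ)..(1:ℝ), u x) = 0 ∧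
    BddAbove (Set.range (enSeq s u))


/-! ### Auxiliary lemmas for Statement 8 -/

lemma my_supNorm_nonneg (u : ℝ → ℝ) : 0 ≤ supNorm u :=
  Real.iSup_nonneg fun _ => abs_nonneg _

lemma my_supNorm_le {u : ℝ → ℝ} {c : ℝ} (hc : 0 ≤ c) (h : ∀ x, |u x| ≤ c) :
    supNorm u ≤ c := Real.iSup_le h hc

lemma my_bddAbove_abs_of_periodic {u : ℝ → ℝ} (hp : Function.Periodic u 1)
    (hc : Continuous u) : BddAbove (Set.range fun x => |u x|) := by
  have h2 : Function.Periodic (fun x => |u x|) 1 := fun x => by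
    show |u (x + 1)| = |u x|; rw [hp x]
  have himg := h2.image_Icc one_pos 0
  rw [zero_add] at himg
  rw [← himg]
  exact (isCompact_Icc.image hc.abs).bddAbove

lemma my_abs_le_supNorm {u : ℝ → ℝ} (hp : Function.Periodic u 1) (hc : Continuous u)
    (x : ℝ) : |u x| ≤ supNorm u :=
  le_ciSup (my_bddAbove_abs_of_periodic hp hc) x

lemma my_hasDerivAt_aInv {u : ℝ → ℝ} (hu : Continuous u) (x₀ x : ℝ) :
    HasDerivAt (aInv x₀ u) (u x) x := by
  have := ((hu.integral_hasStrictDerivAt x₀ x).hasDerivAt).sub_const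
    (∫ z in (0:ℝ)..(1:ℝ), (∫ y in x₀..z, u y))
  exact this

lemma my_aInv_sub {u : ℝ → ℝ} (hu : Continuous u) (x₀ y z : ℝ) :
    aInv x₀ u z - aInv x₀ u y = ∫ t in y..z, u t := by
  have := intervalIntegral.integral_add_adjacent_intervals
    (μ := MeasureTheory.volume) (hu.intervalIntegrable x₀ y) (hu.intervalIntegrable y z)
  simp only [aInv]
  linarith

lemma my_continuous_aInv {u : ℝ → ℝ} (hu : Continuous u) (x₀ : ℝ) :
    Continuous (aInv x₀ u) :=
  continuous_iff_continuousAt.2 fun x => (my_hasDerivAt_aInv hu x₀ x).continuousAt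

lemma my_integral_aInv {u : ℝ → ℝ} (hu : Continuous u) (x₀ : ℝ) :
    ∫ y in (0:ℝ)..(1:ℝ), aInv x₀ u y = 0 := by
  have hF : Continuous fun y => ∫ t in x₀..y, u t :=
    continuous_iff_continuousAt.2 fun x =>
      ((hu.integral_hasStrictDerivAt x₀ x).hasDerivAt).continuousAt
  simp only [aInv]
  rw [intervalIntegral.integral_sub (hF.intervalIntegrable 0 1)
    (intervalIntegrable_const (μ := MeasureTheory.volume))]
  simp

lemma my_key (x₀ : ℝ) (γ γinv : ℝ → ℝ) (hγ : ContDiff ℝ 1 γ) (hγinvc : Continuous γinv)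
    (hlift : ∀ x, γ (x + 1) = γ x + 1) (hli : Function.LeftInverse γinv γ)
    (f : ℝ → ℝ) (hf : Continuous f) (hfp : Function.Periodic f 1) :
    c1Norm (fun x => aInvConj x₀ γ γinv f x - aInv x₀ f x) ≤
      3 * supNorm f * distC1 γ := by
  have hγc : Continuous γ := hγ.continuous
  have hγd : Differentiable ℝ γ := hγ.differentiable one_ne_zero
  have hγ'c : Continuous (deriv γ) := hγ.continuous_deriv le_rfl
  set M := supNorm f with hM
  set d := distC1 γ with hd
  have hM0 : 0 ≤ M := my_supNorm_nonneg f
  have hd0 : 0 ≤ d := add_nonneg (my_supNorm_nonneg _) (my_supNorm_nonneg _)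
  have hfM : ∀ x, |f x| ≤ M := my_abs_le_supNorm hfp hf
  -- γ - id : periodic and continuous
  have hγidp : Function.Periodic (fun x => γ x - x) 1 := fun x => by
    show γ (x + 1) - (x + 1) = γ x - x
    rw [hlift x]; ring
  have hγidc : Continuous fun x => γ x - x := hγc.sub continuous_id
  have hγx : ∀ x, |γ x - x| ≤ d := fun x =>
    (my_abs_le_supNorm hγidp hγidc x).trans
      (le_add_of_nonneg_right (my_supNorm_nonneg _))
  -- deriv γ is periodic
  have hγ'per : Function.Periodic (deriv γ) 1 := by
    intro x
    have h1 : HasDerivAt (fun y => γ (y + 1)) (deriv γ (x + 1) * 1) x :=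
      (hγd (x + 1)).hasDerivAt.comp x ((hasDerivAt_id x).add_const 1)
    have heq : (fun y => γ (y + 1)) = fun y => γ y + 1 := funext fun y => hlift y
    rw [heq] at h1
    have h2 : HasDerivAt (fun y => γ y + 1) (deriv γ x) x :=
      (hγd x).hasDerivAt.add_const 1
    have := h1.unique h2
    rwa [mul_one] at this
  have hder : deriv (fun x => γ x - x) = fun x => deriv γ x - 1 :=
    funext fun x => ((hγd x).hasDerivAt.sub (hasDerivAt_id x)).deriv
  have hγ'1p : Function.Periodic (fun x => deriv γ x - 1) 1 := fun x => by
    show deriv γ (x + 1) - 1 = deriv γ x - 1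
    rw [hγ'per x]
  have hγ'1c : Continuous fun x => deriv γ x - 1 := hγ'c.sub continuous_const
  have hγ' : ∀ x, |deriv γ x - 1| ≤ d := by
    intro x
    have := my_abs_le_supNorm hγ'1p hγ'1c x
    have h2 : supNorm (fun x => deriv γ x - 1) ≤ d := by
      rw [hd, distC1, c1Norm, hder]
      exact le_add_of_nonneg_left (my_supNorm_nonneg _)
    exact this.trans h2
  -- the difference function h and its derivative
  set g : ℝ → ℝ := f ∘ γinv with hgdef
  have hgc : Continuous g := hf.comp hγinvc
  have hgM : ∀ z, |g z| ≤ M := fun z => hfM (γinv z)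
  set h : ℝ → ℝ := fun x => aInvConj x₀ γ γinv f x - aInv x₀ f x with hhdef
  set φ : ℝ → ℝ := fun x => f x * (deriv γ x - 1) with hφdef
  have hφc : Continuous φ := hf.mul hγ'1c
  have hφp : Function.Periodic φ 1 := fun x => by
    show f (x + 1) * (deriv γ (x + 1) - 1) = f x * (deriv γ x - 1)
    rw [hfp x, hγ'per x]
  have hφM : ∀ x, |φ x| ≤ M * d := fun x => by
    rw [hφdef, abs_mul]
    exact mul_le_mul (hfM x) (hγ' x) (abs_nonneg _) hM0
  have hh' : ∀ x, HasDerivAt h (φ x) x := by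
    intro x
    have h1 : HasDerivAt (fun x => aInv x₀ g (γ x)) (g (γ x) * deriv γ x) x :=
      (my_hasDerivAt_aInv hgc x₀ (γ x)).comp x (hγd x).hasDerivAt
    have h2 : HasDerivAt (aInv x₀ f) (f x) x := my_hasDerivAt_aInv hf x₀ x
    have h3 := h1.sub h2
    have hgγ : g (γ x) = f x := by rw [hgdef]; simp [hli x]
    have he : φ x = g (γ x) * deriv γ x - f x := by rw [hgγ, hφdef]; ring
    rw [he]
    exact h3
  have hhc : Continuous h := continuous_iff_continuousAt.2 fun x => (hh' x).continuousAt
  have hderivh : deriv h = φ := funext fun x => (hh' x).deriv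
  have hd1 : supNorm (deriv h) ≤ M * d := by
    rw [hderivh]; exact my_supNorm_le (mul_nonneg hM0 hd0) hφM
  -- FTC for h
  have hsub : ∀ y z : ℝ, h z - h y = ∫ t in y..z, φ t := fun y z =>
    (intervalIntegral.integral_eq_sub_of_hasDerivAt (fun t _ => hh' t)
      (hφc.intervalIntegrable y z)).symm
  have hsubbd : ∀ y z : ℝ, |h z - h y| ≤ M * d * |z - y| := by
    intro y z
    rw [hsub y z]
    have := intervalIntegral.norm_integral_le_of_norm_le_const
      (C := M * d) (f := φ) (a := y) (b := z) (fun t _ => by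
        rw [Real.norm_eq_abs]; exact hφM t)
    rwa [Real.norm_eq_abs] at this
  set m : ℝ := ∫ t in (0:ℝ)..(1:ℝ), φ t with hmdef
  have hstep : ∀ x : ℝ, h (x + 1) = h x + m := by
    intro x
    have h1 := hsub x (x + 1)
    have h2 := hφp.intervalIntegral_add_eq x 0
    rw [zero_add] at h2
    rw [h2] at h1
    linarith
  rcases eq_or_ne m 0 with hm0 | hm0
  · -- h is periodic: genuine bound on supNorm h
    have hper : Function.Periodic h 1 := fun x => by
      have := hstep x; rw [hm0, add_zero] at this; exact this
    -- mean of h is small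
    have hAγ : ∀ y, |aInv x₀ g (γ y) - aInv x₀ g y| ≤ M * d := by
      intro y
      rw [my_aInv_sub hgc x₀ y (γ y)]
      have h1 := intervalIntegral.norm_integral_le_of_norm_le_const
        (C := M) (f := g) (a := y) (b := γ y) (fun t _ => by
          rw [Real.norm_eq_abs]; exact hgM t)
      rw [Real.norm_eq_abs] at h1
      exact h1.trans (mul_le_mul_of_nonneg_left (hγx y) hM0)
    have hAc : Continuous (aInv x₀ g) := my_continuous_aInv hgc x₀
    have hBc : Continuous (aInv x₀ f) := my_continuous_aInv hf x₀
    have i1 : IntervalIntegrable (fun y => aInv x₀ g (γ y) - aInv x₀ g y)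
        MeasureTheory.volume 0 1 :=
      ((hAc.comp hγc).sub hAc).intervalIntegrable 0 1
    have i2 : IntervalIntegrable (aInv x₀ g) MeasureTheory.volume 0 1 :=
      hAc.intervalIntegrable 0 1
    have i3 : IntervalIntegrable (aInv x₀ f) MeasureTheory.volume 0 1 :=
      hBc.intervalIntegrable 0 1
    have e1 : ∫ y in (0:ℝ)..1, h y
        = ∫ y in (0:ℝ)..1, (aInv x₀ g (γ y) - aInv x₀ g y) := by
      have hsplit : h = fun y =>
          (aInv x₀ g (γ y) - aInv x₀ g y) + (aInv x₀ g y - aInv x₀ f y) := by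
        funext y
        show aInv x₀ g (γ y) - aInv x₀ f y = _
        ring
      rw [hsplit, intervalIntegral.integral_add i1 (i2.sub i3),
        intervalIntegral.integral_sub i2 i3, my_integral_aInv hgc x₀,
        my_integral_aInv hf x₀]
      ring
    have hmean : |∫ y in (0:ℝ)..1, h y| ≤ M * d := by
      rw [e1]
      have := intervalIntegral.norm_integral_le_of_norm_le_const
        (C := M * d) (f := fun y => aInv x₀ g (γ y) - aInv x₀ g y)
        (a := (0:ℝ)) (b := 1) (fun t _ => by
          rw [Real.norm_eq_abs]; exact hAγ t)
      rw [Real.norm_eq_abs] at this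
      simpa using this
    have hbd01 : ∀ x ∈ Set.Icc (0:ℝ) 1, |h x| ≤ 2 * (M * d) := by
      intro x hx
      have e2 : ∫ y in (0:ℝ)..1, (h x - h y) = h x - ∫ y in (0:ℝ)..1, h y := by
        rw [intervalIntegral.integral_sub intervalIntegrable_const
          (hhc.intervalIntegrable 0 1)]
        simp
      have hbd : |h x - ∫ y in (0:ℝ)..1, h y| ≤ M * d := by
        rw [← e2]
        have := intervalIntegral.norm_integral_le_of_norm_le_const
          (C := M * d) (f := fun y => h x - h y) (a := (0:ℝ)) (b := 1)
          (fun t ht => by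
            rw [Real.norm_eq_abs]
            have ht' : t ∈ Set.Icc (0:ℝ) 1 := by
              rw [Set.uIoc_of_le (by norm_num : (0:ℝ) ≤ 1)] at ht
              exact ⟨le_of_lt ht.1, ht.2⟩
            have h1 := hsubbd t x
            have h2 : |x - t| ≤ 1 := by
              rw [abs_le]
              constructor <;> [linarith [hx.1, ht'.2]; linarith [hx.2, ht'.1]]
            calc |h x - h t| ≤ M * d * |x - t| := h1
              _ ≤ M * d * 1 := mul_le_mul_of_nonneg_left h2 (mul_nonneg hM0 hd0)
              _ = M * d := mul_one _)
        rw [Real.norm_eq_abs] at this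
        simpa using this
      calc |h x| = |(h x - ∫ y in (0:ℝ)..1, h y) + ∫ y in (0:ℝ)..1, h y| := by
            ring_nf
        _ ≤ |h x - ∫ y in (0:ℝ)..1, h y| + |∫ y in (0:ℝ)..1, h y| := abs_add_le _ _
        _ ≤ M * d + M * d := add_le_add hbd hmean
        _ = 2 * (M * d) := by ring
    have hbdall : ∀ x, |h x| ≤ 2 * (M * d) := by
      intro x
      have hfr : h (Int.fract x) = h x := by
        have := hper.sub_int_mul_eq (x := x) ⌊x⌋
        rw [mul_one] at this
        rw [Int.fract]
        exact this
      rw [← hfr]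
      exact hbd01 _ ⟨Int.fract_nonneg x, le_of_lt (Int.fract_lt_one x)⟩
    have hd0' : supNorm h ≤ 2 * (M * d) :=
      my_supNorm_le (by positivity) hbdall
    show supNorm h + supNorm (deriv h) ≤ 3 * M * d
    linarith
  · -- h is unbounded: supNorm h = 0
    have hn : ∀ n : ℕ, h n = h 0 + n * m := by
      intro n
      induction n with
      | zero => simp
      | succ k ih =>
        have := hstep k
        push_cast
        push_cast at ih
        linarith
    have hnb : ¬ BddAbove (Set.range fun x => |h x|) := by
      rintro ⟨K, hK⟩
      obtain ⟨n, hn'⟩ := exists_nat_gt ((K + |h 0|) / |m|)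
      have hK' : |h (n : ℝ)| ≤ K := hK ⟨(n : ℝ), rfl⟩
      have habs : (n : ℝ) * |m| = |h (n : ℝ) - h 0| := by
        rw [hn n]
        rw [show h 0 + (n : ℝ) * m - h 0 = (n : ℝ) * m by ring, abs_mul,
          Nat.abs_cast]
      have h1 : (n : ℝ) * |m| ≤ K + |h 0| := by
        rw [habs]
        calc |h (n:ℝ) - h 0| ≤ |h (n:ℝ)| + |h 0| := abs_sub _ _
          _ ≤ K + |h 0| := by linarith
      have hm' : 0 < |m| := abs_pos.mpr hm0
      have h2 : (K + |h 0|) / |m| < (n : ℝ) := hn'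
      have := (div_lt_iff₀ hm').mp h2
      linarith
    have hsup0 : supNorm h = 0 := Real.iSup_of_not_bddAbove hnb
    show supNorm h + supNorm (deriv h) ≤ 3 * M * d
    have : 0 ≤ M * d := mul_nonneg hM0 hd0
    rw [hsup0]
    linarith

/-- For every continuous function `f` on the circle and every `C¹`
diffeomorphism `γ` of the circle,
`‖(∂ₓ⁻¹)_γ f − ∂ₓ⁻¹ f‖_{C¹} ≤ C_γ ‖f‖_{L^∞} ‖γ − id‖_{C¹}`, where the constant `C_γ`
depends only on the `C¹` norms of `γ` and `γ⁻¹`. -/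
theorem aInv_conj_C1_bound (x₀ : ℝ) :
    ∃ C : ℝ → ℝ → ℝ, ∀ γ : C1Diffeo, ∀ f : ℝ → ℝ,
      Continuous f → Function.Periodic f 1 →
      c1Norm (fun x => aInvConj x₀ γ.f γ.finv f x - aInv x₀ f x) ≤
        C (mapC1Norm γ.f) (mapC1Norm γ.finv) * supNorm f * distC1 γ.f := by
  refine ⟨fun _ _ => 3, fun γ f hf hfp => ?_⟩
  exact my_key x₀ γ.f γ.finv γ.contDiff γ.contDiff_inv.continuous γ.lift γ.left_inv f hf hfp

end
end

section
/- For all 0 < s' < s < 1 and every u ∈ E_s, the derivative P₁(u) := −∂_x u lies in E_{s'} and satisfies |||P₁(u)|||_{s'} ≤ (1/(s − s')) |||u|||_s. -/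
open MeasureTheory Set

noncomputable section

lemma fc_neg (g : ℝ → ℝ) (n : ℤ) : fc (fun x => -g x) n = -fc g n := by
  unfold fc
  rw [← intervalIntegral.integral_neg]
  congr 1; funext x; push_cast; ring

lemma hsNorm_neg (σ : ℝ) (g : ℝ → ℝ) : hsNorm σ (fun x => -g x) = hsNorm σ g := by
  unfold hsNorm
  congr 1
  exact tsum_congr fun n => by rw [fc_neg, norm_neg]

lemma iterate_deriv_neg (k : ℕ) (g : ℝ → ℝ) :
    deriv^[k] (fun x => -g x) = fun x => -deriv^[k] g x := by
  induction k generalizing g with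
  | zero => simp
  | succ k ih =>
    rw [Function.iterate_succ_apply, Function.iterate_succ_apply]
    have : deriv (fun x => -g x) = fun x => -deriv g x := funext fun x => deriv.neg
    rw [this, ih]

lemma aux_geom (r : ℝ) (hr0 : 0 ≤ r) (hr1 : r < 1) (k : ℕ) :
    ((k : ℝ) + 1) * r ^ k * (1 - r) ≤ 1 := by
  have h2 : ((k : ℝ) + 1) * r ^ k ≤ ∑ j ∈ Finset.range (k + 1), r ^ j := by
    calc ((k : ℝ) + 1) * r ^ k = ∑ _j ∈ Finset.range (k + 1), r ^ k := by
          rw [Finset.sum_const, Finset.card_range, nsmul_eq_mul]; push_cast; ring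
      _ ≤ ∑ j ∈ Finset.range (k + 1), r ^ j :=
          Finset.sum_le_sum fun j hj =>
            pow_le_pow_of_le_one hr0 hr1.le (Nat.lt_succ_iff.mp (Finset.mem_range.mp hj))
  have h3 : (∑ j ∈ Finset.range (k + 1), r ^ j) * (1 - r) = 1 - r ^ (k + 1) := by
    have h := geom_sum_mul r (k + 1)
    linear_combination -h
  have h4 := mul_le_mul_of_nonneg_right h2 (sub_nonneg.mpr hr1.le)
  have h5 : (0:ℝ) ≤ r ^ (k + 1) := pow_nonneg hr0 _
  linarith


/-- For `0 < s' < s < 1` and `u ∈ E_s`, the derivative `P₁(u) = −∂ₓ u`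
lies in `E_{s'}` and satisfies `|||P₁(u)|||_{s'} ≤ (1/(s − s')) |||u|||_s`. -/
theorem eNorm_P1 (s' s : ℝ) (h0 : 0 < s') (h1 : s' < s) (h2 : s < 1)
    (u : ℝ → ℝ) (hu : MemE s u) :
    MemE s' (fun x => -deriv u x) ∧
    eNorm s' (fun x => -deriv u x) ≤ (1 / (s - s')) * eNorm s u := by
  obtain ⟨hper, hsm, hmean, hbdd⟩ := hu
  have hs : 0 < s := h0.trans h1
  have hss' : 0 < s - s' := sub_pos.mpr h1
  -- pointwise inequality on the sequence
  have hkey : ∀ k : ℕ, enSeq s' (fun x => -deriv u x) k ≤ (1 / (s - s')) * enSeq s u (k + 1) := by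
    intro k
    have hEq : enSeq s' (fun x => -deriv u x) k =
        hsNorm 2 (deriv^[k + 1] u) * s' ^ k * ((k : ℝ) + 1) ^ 2 / (Nat.factorial k : ℝ) := by
      unfold enSeq
      rw [iterate_deriv_neg, hsNorm_neg]
      rw [Function.iterate_succ_apply]
    have hEq2 : enSeq s u (k + 1) =
        hsNorm 2 (deriv^[k + 1] u) * s ^ (k + 1) * ((k : ℝ) + 2) ^ 2
          / (((k : ℝ) + 1) * (Nat.factorial k : ℝ)) := by
      unfold enSeq
      rw [Nat.factorial_succ]
      push_cast
      ring_nf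
    rw [hEq, hEq2]
    set H := hsNorm 2 (deriv^[k + 1] u) with hH
    have hHnn : 0 ≤ H := Real.sqrt_nonneg _
    have hF : (0:ℝ) < (Nat.factorial k : ℝ) := by positivity
    have hk1 : (0:ℝ) < (k : ℝ) + 1 := by positivity
    have h4 : ((k : ℝ) + 1) * s' ^ k * (s - s') ≤ s ^ (k + 1) := by
      have hg := aux_geom (s' / s) (div_nonneg h0.le hs.le) ((div_lt_one hs).mpr h1) k
      have hsk : (0:ℝ) < s ^ (k + 1) := pow_pos hs _
      have : ((k : ℝ) + 1) * s' ^ k * (s - s') =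
          (((k : ℝ) + 1) * (s' / s) ^ k * (1 - s' / s)) * s ^ (k + 1) := by
        field_simp
        rw [div_pow, pow_succ, ← mul_assoc, div_mul_cancel₀ _ (pow_ne_zero k hs.ne')]
      rw [this]
      calc (((k : ℝ) + 1) * (s' / s) ^ k * (1 - s' / s)) * s ^ (k + 1)
          ≤ 1 * s ^ (k + 1) := mul_le_mul_of_nonneg_right hg hsk.le
        _ = s ^ (k + 1) := one_mul _
    have hkey2 : s' ^ k * ((k : ℝ) + 1) ^ 3 * (s - s') ≤ s ^ (k + 1) * ((k : ℝ) + 2) ^ 2 := by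
      have h5 : ((k : ℝ) + 1) ^ 2 ≤ ((k : ℝ) + 2) ^ 2 := by nlinarith [Nat.cast_nonneg (α := ℝ) k]
      have h6 : (0:ℝ) ≤ ((k : ℝ) + 1) * s' ^ k * (s - s') := by positivity
      nlinarith [mul_le_mul h4 h5 (by positivity) (pow_pos hs (k+1)).le]
    have hrhs : (1 / (s - s')) * (H * s ^ (k + 1) * ((k : ℝ) + 2) ^ 2
          / (((k : ℝ) + 1) * (Nat.factorial k : ℝ))) =
        (H * (s ^ (k + 1) * ((k : ℝ) + 2) ^ 2)) / ((s - s') * (((k : ℝ) + 1) * (Nat.factorial k : ℝ))) := by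
      field_simp
    rw [hrhs, div_le_div_iff₀ hF (by positivity)]
    nlinarith [mul_le_mul_of_nonneg_left hkey2 (mul_nonneg hHnn hF.le)]
  have hub : ∀ k, enSeq s' (fun x => -deriv u x) k ≤ (1 / (s - s')) * eNorm s u := by
    intro k
    refine (hkey k).trans ?_
    exact mul_le_mul_of_nonneg_left (le_ciSup hbdd (k + 1)) (by positivity)
  constructor
  · refine ⟨?_, ?_, ?_, ?_⟩
    · intro x
      have hq : Function.Periodic (deriv u) 1 := by
        intro y
        have hf : (fun z => u (z + 1)) = u := funext hper
        rw [← deriv_comp_add_const u 1 y, hf]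
      simp only [hq x]
    · have h' := contDiff_infty_iff_deriv.mp hsm
      exact h'.2.neg
    · rw [intervalIntegral.integral_neg, intervalIntegral.integral_deriv_eq_sub
        (fun x _ => (hsm.differentiable (by simp)).differentiableAt)
        ((hsm.continuous_deriv (by simp)).intervalIntegrable 0 1)]
      have h01 : u 1 = u 0 := by simpa using hper 0
      rw [h01]; ring
    · exact ⟨(1 / (s - s')) * eNorm s u, by rintro y ⟨k, rfl⟩; exact hub k⟩
  · exact ciSup_le hub


end
end
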